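/- arXiv:2202.01992 — 2 statements merged into one kernel-verified Lean document; each statement's English description precedes it below -/
import Mathlib

section
/- The following functions satisfy φ‴(ξ) + φ(ξ)·φ″(ξ) + ((2φ(ξ)² + 3φ′(ξ) − 1)/9)·φ′(ξ) = 0 on every interval where they are defined: (i) φ(ξ) = −(3√2/2)·tan((√2/3)·ξ) on any interval where cos((√2/3)ξ) ≠ 0, (ii) φ(ξ) = (3√2/2)·cot((√2/3)·ξ) on any interval where sin((√2/3)ξ) ≠ 0, (iii) φ(ξ) = 9/(2ξ) + √2/2 and (iv) φ(ξ) = 9/(2ξ) − √2/2, both for ξ ≠ 0. -/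
/-!
Each of the four curvatures solves a Riccati equation `φ′ = -(2/9)φ² + βφ + (9β² + ε)`:
`β = 0` for the `tan` and `cot` solutions, `β = 4c/9` for `9/(2ξ) + c` with `2c² = -ε`.
Differentiating the Riccati equation twice turns the extremal operator into `φ′` times a
quadratic polynomial in `φ`; the leading coefficient `-2/9` kills its `φ²` and `φ` terms and
the constant term `9β² + ε` kills the rest.
-/

/-- The fully affine extremal (Euler–Lagrange) operator with parameter `ε`:
`φ‴ + φ·φ″ + ((2φ² + 3φ′ + ε)/9)·φ′`. -/
noncomputable def extremalOp (ε : ℝ) (φ : ℝ → ℝ) (ξ : ℝ) : ℝ :=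
  iteratedDeriv 3 φ ξ + φ ξ * iteratedDeriv 2 φ ξ
    + ((2 * (φ ξ) ^ 2 + 3 * deriv φ ξ + ε) / 9) * deriv φ ξ

open Filter Topology

lemma deriv_eventuallyEq_of_hasDerivAt {U : Set ℝ} (hU : IsOpen U) {f f' : ℝ → ℝ}
    (hf : ∀ y ∈ U, HasDerivAt f (f' y) y) {x : ℝ} (hx : x ∈ U) : deriv f =ᶠ[𝓝 x] f' := by
  filter_upwards [hU.mem_nhds hx] with y hy using (hf y hy).deriv

lemma extremalOp_eq_of_hasDerivAt {U : Set ℝ} (hU : IsOpen U) {φ φ₁ φ₂ φ₃ : ℝ → ℝ}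
    (h₁ : ∀ y ∈ U, HasDerivAt φ (φ₁ y) y) (h₂ : ∀ y ∈ U, HasDerivAt φ₁ (φ₂ y) y)
    (h₃ : ∀ y ∈ U, HasDerivAt φ₂ (φ₃ y) y) (ε : ℝ) {x : ℝ} (hx : x ∈ U) :
    extremalOp ε φ x = φ₃ x + φ x * φ₂ x + ((2 * φ x ^ 2 + 3 * φ₁ x + ε) / 9) * φ₁ x := by
  have e₁ := deriv_eventuallyEq_of_hasDerivAt hU h₁ hx
  have e₂ : iteratedDeriv 2 φ =ᶠ[𝓝 x] φ₂ := by
    rw [iteratedDeriv_succ, iteratedDeriv_one]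
    filter_upwards [hU.mem_nhds hx, e₁.eventuallyEq_nhds] with y hy hy'
    rw [hy'.deriv_eq, (h₂ y hy).deriv]
  rw [extremalOp, iteratedDeriv_succ, e₂.deriv_eq, (h₃ x hx).deriv, e₂.eq_of_nhds, e₁.eq_of_nhds]

theorem extremalOp_eq_zero_of_riccati {U : Set ℝ} (hU : IsOpen U) {φ : ℝ → ℝ} (β ε : ℝ)
    (hφ : ∀ y ∈ U, HasDerivAt φ (-(2 / 9) * φ y ^ 2 + β * φ y + (9 * β ^ 2 + ε)) y)
    {x : ℝ} (hx : x ∈ U) : extremalOp ε φ x = 0 := by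
  set R : ℝ → ℝ := fun u => -(2 / 9) * u ^ 2 + β * u + (9 * β ^ 2 + ε)
  set R' : ℝ → ℝ := fun u => -(4 / 9) * u + β
  have hR : ∀ y ∈ U, HasDerivAt (fun s => R (φ s)) (R' (φ y) * R (φ y)) y := fun y hy => by
    refine ((((hφ y hy).fun_pow 2).const_mul (-(2 / 9))).fun_add
      ((hφ y hy).const_mul β) |>.add_const (9 * β ^ 2 + ε)).congr_deriv ?_
    simp only [R, R']
    push_cast
    ring
  have hR' : ∀ y ∈ U, HasDerivAt (fun s => R' (φ s) * R (φ s))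
      (-(4 / 9) * R (φ y) * R (φ y) + R' (φ y) * (R' (φ y) * R (φ y))) y := fun y hy =>
    (((hφ y hy).const_mul (-(4 / 9))).add_const β).mul (hR y hy)
  rw [extremalOp_eq_of_hasDerivAt hU hφ hR hR' ε hx]
  simp only [R, R']
  ring

open Real

lemma hasDerivAt_tan_const_mul {a y : ℝ} (h : cos (a * y) ≠ 0) :
    HasDerivAt (fun s => tan (a * s)) (a * (1 + tan (a * y) ^ 2)) y := by
  refine ((hasDerivAt_tan h).comp y ((hasDerivAt_id y).const_mul a)).congr_deriv ?_
  rw [← inv_one_add_tan_sq h, one_div, inv_inv]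
  ring

lemma hasDerivAt_cos_div_sin_const_mul {a y : ℝ} (h : sin (a * y) ≠ 0) :
    HasDerivAt (fun s => cos (a * s) / sin (a * s))
      (-a * (1 + (cos (a * y) / sin (a * y)) ^ 2)) y := by
  have hlin := (hasDerivAt_id y).const_mul a
  refine (((hasDerivAt_cos _).comp y hlin).div ((hasDerivAt_sin _).comp y hlin) h).congr_deriv ?_
  simp only [Function.comp_apply, id]
  field_simp
  ring

theorem extremalOp_tan_eq_zero {k a ε ξ : ℝ} (hk : 2 * k = 9 * a) (hε : ε = -(k * a))
    (hξ : cos (a * ξ) ≠ 0) : extremalOp ε (fun s => -k * tan (a * s)) ξ = 0 := by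
  refine extremalOp_eq_zero_of_riccati (U := {s | cos (a * s) ≠ 0})
    (isOpen_ne_fun (by fun_prop) continuous_const) 0 ε (fun y hy => ?_) hξ
  refine ((hasDerivAt_tan_const_mul hy).const_mul (-k)).congr_deriv ?_
  subst hε
  linear_combination (k * tan (a * y) ^ 2 / 9) * hk

theorem extremalOp_cot_eq_zero {k a ε ξ : ℝ} (hk : 2 * k = 9 * a) (hε : ε = -(k * a))
    (hξ : sin (a * ξ) ≠ 0) :
    extremalOp ε (fun s => k * (cos (a * s) / sin (a * s))) ξ = 0 := by
  refine extremalOp_eq_zero_of_riccati (U := {s | sin (a * s) ≠ 0})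
    (isOpen_ne_fun (by fun_prop) continuous_const) 0 ε (fun y hy => ?_) hξ
  refine ((hasDerivAt_cos_div_sin_const_mul hy).const_mul k).congr_deriv ?_
  subst hε
  linear_combination (k * (cos (a * y) / sin (a * y)) ^ 2 / 9) * hk

theorem extremalOp_inv_add_const_eq_zero {c ε ξ : ℝ} (hε : ε = -(2 * c ^ 2)) (hξ : ξ ≠ 0) :
    extremalOp ε (fun s => 9 / (2 * s) + c) ξ = 0 := by
  refine extremalOp_eq_zero_of_riccati (U := {s | s ≠ 0}) isOpen_ne (4 * c / 9) ε
    (fun y hy => ?_) hξ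
  have hy : y ≠ 0 := hy
  refine ((hasDerivAt_const y 9).div ((hasDerivAt_id y).const_mul 2) (by simpa using hy)
    |>.add_const c).congr_deriv ?_
  subst hε
  simp only [id]
  field_simp
  ring

/-- The curves with fully affine curvature `−(3√2/2)·tan((√2/3)ξ)`,
`(3√2/2)·cot((√2/3)ξ)`, `9/(2ξ) + √2/2`, `9/(2ξ) − √2/2` are fully affine
extremal (case `ε = −1`), on the sets where they are defined. -/
theorem tan_cot_rational_extremal :
    (∀ ξ : ℝ, Real.cos (Real.sqrt 2 / 3 * ξ) ≠ 0 →
      extremalOp (-1) (fun s => -(3 * Real.sqrt 2 / 2) * Real.tan (Real.sqrt 2 / 3 * s)) ξ = 0) ∧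
    (∀ ξ : ℝ, Real.sin (Real.sqrt 2 / 3 * ξ) ≠ 0 →
      extremalOp (-1) (fun s => 3 * Real.sqrt 2 / 2 *
        (Real.cos (Real.sqrt 2 / 3 * s) / Real.sin (Real.sqrt 2 / 3 * s))) ξ = 0) ∧
    (∀ ξ : ℝ, ξ ≠ 0 →
      extremalOp (-1) (fun s => 9 / (2 * s) + Real.sqrt 2 / 2) ξ = 0) ∧
    (∀ ξ : ℝ, ξ ≠ 0 →
      extremalOp (-1) (fun s => 9 / (2 * s) - Real.sqrt 2 / 2) ξ = 0) := by
  have h2 : √2 ^ 2 = 2 := sq_sqrt zero_le_two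
  have hk : 2 * (3 * √2 / 2) = 9 * (√2 / 3) := by ring
  have hε : (-1 : ℝ) = -(3 * √2 / 2 * (√2 / 3)) := by linear_combination h2 / 2
  have hc : (-1 : ℝ) = -(2 * (√2 / 2) ^ 2) := by linear_combination h2 / 2
  refine ⟨fun ξ hξ => extremalOp_tan_eq_zero hk hε hξ, fun ξ hξ => extremalOp_cot_eq_zero hk hε hξ,
    fun ξ hξ => extremalOp_inv_add_const_eq_zero hc hξ, fun ξ hξ => ?_⟩
  simpa only [sub_eq_add_neg] using
    extremalOp_inv_add_const_eq_zero (c := -(√2 / 2)) (by rwa [neg_sq]) hξ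
end

section
/- Let a, b > 0 and v ∈ ℝ², and define C : ℝ × ℝ → ℝ² by C(θ, t) = e^{t/9}·(a·cosh θ, b·sinh θ) + v. Let D₁ = det(∂_θC, ∂²_θC), D₂ = det(∂_θC, ∂³_θC), D₃ = det(∂_θC, ∂⁴_θC), D₄ = det(∂²_θC, ∂³_θC). Then for all (θ, t): (i) (3·D₁·D₃ − 5·D₂² + 12·D₁·D₄)/D₁² = −9, so the fully affine metric g = √(−(3D₁D₃ − 5D₂² + 12D₁D₄)/D₁²) equals 3 identically; and (ii) ∂_t C(θ, t) = (1/9)·∂²_θ C(θ, t), i.e. C satisfies the fully affine heat flow ∂_t C = g^{−1}∂_θ(g^{−1}∂_θ C). Hence the hyperbola is an expanding soliton of the fully affine heat flow. -/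
/-!
Writing `C` for the hyperbola at a fixed time, `∂_θ³C = ∂_θC` and `∂_θ⁴C = ∂_θ²C`. Hence
`D₂ = 0`, `D₃ = D₁` and `D₄ = -D₁`, so the radicand is `(3 - 12)D₁²/D₁² = -9` as soon as
`D₁ = -e^{2t/9}ab` is nonzero, and `g = 3`. The time derivative of `C` is `1/9` of
`e^{t/9}(a cosh θ, b sinh θ) = ∂_θ²C`.
-/

/-- Determinant of the 2×2 matrix with columns `u, w ∈ ℝ²`. -/
def det2 (u w : ℝ × ℝ) : ℝ := u.1 * w.2 - u.2 * w.1

open Real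

theorem det2_self (u : ℝ × ℝ) : det2 u u = 0 := by
  unfold det2; ring

theorem det2_swap (u w : ℝ × ℝ) : det2 w u = -det2 u w := by
  unfold det2; ring

theorem fullyAffine_radicand_eq_neg_nine {u w : ℝ × ℝ} (h : det2 u w ≠ 0) :
    (3 * det2 u w * det2 u w - 5 * det2 u u ^ 2 + 12 * det2 u w * det2 w u) / det2 u w ^ 2
      = -9 := by
  rw [det2_self, det2_swap u w]
  field_simp
  ring

section Hyperbola

variable (p q : ℝ)

theorem det2_sinh_cosh (θ : ℝ) :
    det2 (p * sinh θ, q * cosh θ) (p * cosh θ, q * sinh θ) = -(p * q) := by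
  unfold det2
  linear_combination (-(p * q)) * cosh_sq_sub_sinh_sq θ

theorem deriv_cosh_sinh (c : ℝ × ℝ) :
    deriv (fun θ => (p * cosh θ + c.1, q * sinh θ + c.2)) = fun θ => (p * sinh θ, q * cosh θ) :=
  funext fun θ => (((hasDerivAt_cosh θ).const_mul p).add_const c.1 |>.prodMk
    (((hasDerivAt_sinh θ).const_mul q).add_const c.2)).deriv

theorem deriv_sinh_cosh :
    deriv (fun θ => (p * sinh θ, q * cosh θ)) = fun θ => (p * cosh θ, q * sinh θ) :=
  funext fun θ => ((hasDerivAt_sinh θ).const_mul p |>.prodMk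
    ((hasDerivAt_cosh θ).const_mul q)).deriv

theorem iteratedDeriv_two_mul_sinh_cosh (n : ℕ) :
    iteratedDeriv (2 * n) (fun θ => (p * sinh θ, q * cosh θ))
      = fun θ => (p * sinh θ, q * cosh θ) := by
  induction n with
  | zero => exact iteratedDeriv_zero
  | succ n ih =>
    have h0 := deriv_cosh_sinh p q 0
    simp only [Prod.fst_zero, Prod.snd_zero, add_zero] at h0
    rw [Nat.mul_succ, iteratedDeriv_succ, iteratedDeriv_succ, ih, deriv_sinh_cosh, h0]

variable (c : ℝ × ℝ)

theorem iteratedDeriv_odd_cosh_sinh (n : ℕ) :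
    iteratedDeriv (2 * n + 1) (fun θ => (p * cosh θ + c.1, q * sinh θ + c.2))
      = fun θ => (p * sinh θ, q * cosh θ) := by
  rw [iteratedDeriv_succ', deriv_cosh_sinh, iteratedDeriv_two_mul_sinh_cosh]

theorem iteratedDeriv_even_cosh_sinh (n : ℕ) :
    iteratedDeriv (2 * n + 2) (fun θ => (p * cosh θ + c.1, q * sinh θ + c.2))
      = fun θ => (p * cosh θ, q * sinh θ) := by
  rw [iteratedDeriv_succ, iteratedDeriv_odd_cosh_sinh, deriv_sinh_cosh]

end Hyperbola

theorem hasDerivAt_exp_div_smul_add (r t : ℝ) (x c : ℝ × ℝ) :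
    HasDerivAt (fun t' => (exp (t' / r) * x.1 + c.1, exp (t' / r) * x.2 + c.2))
      ((1 / r) • (exp (t / r) * x.1, exp (t / r) * x.2)) t := by
  have hexp : HasDerivAt (fun t' => exp (t' / r)) (exp (t / r) * (1 / r)) t := by
    simpa using ((hasDerivAt_id t).div_const r).exp
  convert ((hexp.mul_const x.1).add_const c.1).prodMk ((hexp.mul_const x.2).add_const c.2)
    using 1
  ext <;> simp only [Prod.smul_fst, Prod.smul_snd, smul_eq_mul] <;> ring

/-- Example 7.2: the expanding family of hyperbolas
`C(θ,t) = e^{t/9}(a cosh θ, b sinh θ) + v` has fully affine metric `g ≡ 3`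
(with `ε = −1`) and satisfies the fully affine heat flow
`∂_t C = (1/9)∂²_θ C = ∂²C/∂ξ²`. -/
theorem hyperbola_expanding_soliton
    (a b : ℝ) (ha : 0 < a) (hb : 0 < b) (v : ℝ × ℝ) (θ t : ℝ) :
    let C : ℝ → ℝ → ℝ × ℝ := fun θ' t' =>
      (Real.exp (t' / 9) * (a * Real.cosh θ') + v.1,
       Real.exp (t' / 9) * (b * Real.sinh θ') + v.2)
    let D1 := det2 (deriv (fun θ' => C θ' t) θ) (iteratedDeriv 2 (fun θ' => C θ' t) θ)
    let D2 := det2 (deriv (fun θ' => C θ' t) θ) (iteratedDeriv 3 (fun θ' => C θ' t) θ)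
    let D3 := det2 (deriv (fun θ' => C θ' t) θ) (iteratedDeriv 4 (fun θ' => C θ' t) θ)
    let D4 := det2 (iteratedDeriv 2 (fun θ' => C θ' t) θ) (iteratedDeriv 3 (fun θ' => C θ' t) θ)
    ((3 * D1 * D3 - 5 * D2 ^ 2 + 12 * D1 * D4) / D1 ^ 2 = -9 ∧
      Real.sqrt (-((3 * D1 * D3 - 5 * D2 ^ 2 + 12 * D1 * D4) / D1 ^ 2)) = 3) ∧
    deriv (fun t' => C θ t') t = (1 / 9 : ℝ) • iteratedDeriv 2 (fun θ' => C θ' t) θ := by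
  intro C D1 D2 D3 D4
  set k := exp (t / 9)
  have hslice : (fun θ' => C θ' t) = fun θ' => (k * a * cosh θ' + v.1, k * b * sinh θ' + v.2) := by
    simp only [C, k, mul_assoc]
  have h1 := iteratedDeriv_odd_cosh_sinh (k * a) (k * b) v 0
  have h2 := iteratedDeriv_even_cosh_sinh (k * a) (k * b) v 0
  have h3 := iteratedDeriv_odd_cosh_sinh (k * a) (k * b) v 1
  have h4 := iteratedDeriv_even_cosh_sinh (k * a) (k * b) v 1
  rw [iteratedDeriv_one] at h1
  have hD1 : D1 ≠ 0 := by
    simp only [D1, hslice, h1, h2, det2_sinh_cosh]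
    have : 0 < k * a * (k * b) := by positivity
    linarith
  have hradicand : (3 * D1 * D3 - 5 * D2 ^ 2 + 12 * D1 * D4) / D1 ^ 2 = -9 := by
    simp only [D1, D2, D3, D4, hslice, h1, h2, h3, h4] at hD1 ⊢
    exact fullyAffine_radicand_eq_neg_nine hD1
  refine ⟨⟨hradicand, ?_⟩, ?_⟩
  · rw [hradicand]; norm_num
  · rw [(hasDerivAt_exp_div_smul_add 9 t (a * cosh θ, b * sinh θ) v).deriv, hslice, h2]
    simp only [k, mul_assoc]
end
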